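/- arXiv:2504.17962 — 5 statements merged into one kernel-verified Lean document; each statement's English description precedes it below -/
import Mathlib

section
/- A finite cyclic group has no nonzero Brauer relations: if H_1,...,H_r are subgroups of a cyclic group G and n_1,...,n_r are integers with ⊕_i ℂ[G/H_i]^{⊕n_i} ≅ 0 as a virtual representation, then ∑_i n_i [G/H_i] = 0 in the Burnside ring of G. -/
/-!
In an abelian group the character of `ℂ[G/T]` is `g ↦ [G : T]` on `T` and `0` off `T`. Write
`c T` for the total coefficient of `T` in the relation. In a cyclic group every subgroup `S` is
generated by one element, and evaluating the relation there gives `∑_{T ≥ S} c T * [G : T] = 0`.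
This system is triangular with nonzero diagonal, so downward induction on `S` forces every
`c S` to vanish.
-/

open scoped BigOperators

/-- The number of fixed points of `g` acting on the coset space `G ⧸ H`
(the value at `g` of the character of the permutation representation `ℂ[G/H]`). -/
noncomputable def permFix {G : Type*} [Group G] (H : Subgroup G) (g : G) : ℕ :=
  Nat.card {x : G ⧸ H // g • x = x}

open Finset

theorem eq_zero_of_forall_sum_filter_le_eq_zero {α M : Type*} [Fintype α] [PartialOrder α]
    [DecidableLE α] [AddCommMonoid M] {f : α → M} (h : ∀ a, ∑ b with a ≤ b, f b = 0) :
    f = 0 := by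
  funext a
  induction a using WellFoundedGT.induction with
  | _ a ih =>
    rw [Pi.zero_apply, ← h a, sum_eq_single_of_mem a (by simp) fun b hb hba =>
      ih b (lt_of_le_of_ne (mem_filter.mp hb).2 (Ne.symm hba))]

section CommGroup

variable {G : Type*} [CommGroup G]

theorem QuotientGroup.smul_eq_self_iff {H : Subgroup G} {g : G} {x : G ⧸ H} :
    g • x = x ↔ g ∈ H := by
  induction x using QuotientGroup.induction_on with
  | H y => simp [mul_comm g]

theorem permFix_eq_ite (H : Subgroup G) (g : G) [Decidable (g ∈ H)] :
    permFix H g = if g ∈ H then Nat.card (G ⧸ H) else 0 := by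
  split_ifs with hg
  · exact Nat.card_congr (Equiv.subtypeUnivEquiv fun _ => QuotientGroup.smul_eq_self_iff.mpr hg)
  · have : IsEmpty {x : G ⧸ H // g • x = x} :=
      ⟨fun x => hg (QuotientGroup.smul_eq_self_iff.mp x.2)⟩
    exact Nat.card_of_isEmpty

open Classical in
theorem sum_mul_permFix_eq {ι : Type*} [Fintype ι] [Fintype (Subgroup G)]
    [DecidableEq (Subgroup G)] (n : ι → ℤ) (H : ι → Subgroup G) (g : G) :
    ∑ i, (n i : ℂ) * permFix (H i) g =
      ∑ T with g ∈ T, ((∑ i with H i = T, n i : ℤ) : ℂ) * Nat.card (G ⧸ T) := by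
  rw [← sum_fiberwise univ H, sum_filter]
  refine sum_congr rfl fun T _ => ?_
  calc ∑ i with H i = T, (n i : ℂ) * permFix (H i) g
      = ∑ i with H i = T, (n i : ℂ) * permFix T g :=
        sum_congr rfl fun i hi => by rw [(mem_filter.mp hi).2]
    _ = _ := by
        rw [← sum_mul, permFix_eq_ite]
        split_ifs <;> simp

end CommGroup

theorem Subgroup.exists_zpowers_eq {G : Type*} [Group G] [IsCyclic G] (S : Subgroup G) :
    ∃ g : G, zpowers g = S := by
  obtain ⟨g, hg⟩ := isCyclic_iff_exists_zpowers_eq_top.mp (Subgroup.isCyclic S)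
  exact ⟨g, by
    rw [← S.subtype_apply, ← MonoidHom.map_zpowers, hg, ← MonoidHom.range_eq_map, range_subtype]⟩

/-- A finite cyclic group has no nonzero Brauer relations: if
`H_1, …, H_r` are subgroups of a cyclic group `G` and `n_1, …, n_r` integers with
`⊕_i ℂ[G/H_i]^{⊕ n_i} ≅ 0` as a virtual representation (equivalently, the virtual
permutation character vanishes), then `∑_i n_i [G/H_i] = 0` in the Burnside ring of `G`
(i.e. for every subgroup `H` the total coefficient of `H` is zero; since `G` is abelian,
conjugacy of subgroups is just equality). -/
theorem stmt3 {G : Type*} [Group G] [Fintype G] [IsCyclic G]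
    {ι : Type*} [Fintype ι] [DecidableEq (Subgroup G)]
    (n : ι → ℤ) (H : ι → Subgroup G)
    (hrel : ∀ g : G, (∑ i, (n i : ℂ) * (permFix (H i) g : ℂ)) = 0) :
    ∀ S : Subgroup G, (∑ i ∈ Finset.univ.filter (fun i => H i = S), n i) = 0 := by
  classical
  let _ : CommGroup G := IsCyclic.commGroup
  let _ : Fintype (Subgroup G) := .ofFinite _
  have hsum : ∀ S : Subgroup G,
      ∑ T with S ≤ T, ((∑ i with H i = T, n i : ℤ) : ℂ) * Nat.card (G ⧸ T) = 0 := by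
    intro S
    obtain ⟨g, rfl⟩ := S.exists_zpowers_eq
    simpa only [Subgroup.zpowers_le, sum_mul_permFix_eq] using hrel g
  intro S
  have hS := congrFun (eq_zero_of_forall_sum_filter_le_eq_zero hsum) S
  exact_mod_cast (mul_eq_zero.mp hS).resolve_right (by exact_mod_cast Nat.card_pos.ne')
end

section
/- Let G be a finite group, D ≤ G, and τ = ℚ[G/D] the rational permutation representation equipped with the standard pairing making the cosets of G/D an orthonormal basis. Then for every subgroup H ≤ G, the determinant of (1/|H|)⟨·,·⟩ on the H-invariants τ^H (computed in the basis of H-orbit sums) equals ∏_{w ∈ H\G/D} 1/|H ∩ wDw^{-1}|. -/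
/-!
Orbit sums of cosets lying in distinct double cosets `HtD ≠ Ht'D` have disjoint supports, so the
Gram matrix is diagonal. Its diagonal entry `|H·tD| / |H|` is `1 / |Stab_H(tD)|` by the
orbit-stabilizer theorem, and `Stab_H(tD) = H ∩ tDt⁻¹`.
-/

open Function MulAction

theorem Matrix.det_of_inter_of_pairwise_disjoint {ι α K : Type*} [Fintype ι] [DecidableEq ι]
    [CommRing K] (μ : Set α → K) (hμ : μ ∅ = 0) (S : ι → Set α)
    (hS : Pairwise (Disjoint on S)) :
    (Matrix.of fun i j => μ (S i ∩ S j)).det = ∏ i, μ (S i) := by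
  have hdiag : (Matrix.of fun i j => μ (S i ∩ S j)) = Matrix.diagonal fun i => μ (S i) := by
    ext i j
    obtain rfl | hij := eq_or_ne i j
    · simp
    · simp [Matrix.diagonal_apply_ne _ hij, (hS hij).inter_eq, hμ]
  rw [hdiag, Matrix.det_diagonal]

theorem MulAction.natCard_orbit_mul_natCard_stabilizer {G X : Type*} [Group G] [MulAction G X]
    (x : X) : Nat.card (orbit G x) * Nat.card (stabilizer G x) = Nat.card G := by
  rw [← Nat.card_prod]
  exact Nat.card_congr (orbitProdStabilizerEquivGroup G x)

theorem Subgroup.natCard_subgroupOf {G : Type*} [Group G] (H K : Subgroup G) :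
    Nat.card (K.subgroupOf H) = Nat.card ↥(H ⊓ K) := by
  rw [← inf_subgroupOf_left]
  exact Nat.card_congr (Subgroup.subgroupOfEquivOfLe inf_le_left).toEquiv

namespace QuotientGroup

variable {G : Type*} [Group G] (D H : Subgroup G)

theorem stabilizer_mk (t : G) :
    stabilizer G (t : G ⧸ D) = D.map (MulAut.conj t).toMonoidHom := by
  simpa using stabilizer_smul_eq_stabilizer_map_conj t ((1 : G) : G ⧸ D)

theorem stabilizer_subgroup_mk (t : G) :
    stabilizer H (t : G ⧸ D) = (D.map (MulAut.conj t).toMonoidHom).subgroupOf H := by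
  rw [← stabilizer_mk]
  rfl

theorem setOf_exists_mk_mul_eq_orbit (t : G) :
    {x : G ⧸ D | ∃ h ∈ H, x = ↑(h * t)} = orbit H (t : G ⧸ D) := by
  ext x
  constructor
  · rintro ⟨h, hh, rfl⟩
    exact ⟨⟨h, hh⟩, rfl⟩
  · rintro ⟨⟨h, hh⟩, rfl⟩
    exact ⟨h, hh, rfl⟩

theorem exists_eq_mul_mul_of_not_disjoint_orbit {t t' : G}
    (h : ¬Disjoint (orbit H (t : G ⧸ D)) (orbit H (t' : G ⧸ D))) :
    ∃ a ∈ H, ∃ k ∈ D, t' = a * t * k := by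
  have ht' : (t' : G ⧸ D) ∈ orbit H (t : G ⧸ D) := by
    obtain ⟨x, hx, hx'⟩ := Set.not_disjoint_iff.mp h
    rw [← orbit_eq_iff, ← orbit_eq_iff.mpr hx, ← orbit_eq_iff.mpr hx']
  obtain ⟨⟨a, ha⟩, hat⟩ := ht'
  exact ⟨a, ha, (a * t)⁻¹ * t', QuotientGroup.eq.mp hat, by group⟩

theorem natCard_orbit_mk_div_natCard {K : Type*} [Field K] [CharZero K] [Finite G] (t : G) :
    (Nat.card (orbit H (t : G ⧸ D)) : K) / Nat.card H =
      1 / Nat.card ↥(H ⊓ D.map (MulAut.conj t).toMonoidHom) := by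
  have hstab : Nat.card (stabilizer H (t : G ⧸ D)) =
      Nat.card ↥(H ⊓ D.map (MulAut.conj t).toMonoidHom) := by
    rw [stabilizer_subgroup_mk, Subgroup.natCard_subgroupOf]
  have : Nonempty (orbit H (t : G ⧸ D)) := (nonempty_orbit _).to_subtype
  rw [← hstab, ← natCard_orbit_mul_natCard_stabilizer (G := H) (t : G ⧸ D), Nat.cast_mul,
    div_mul_cancel_left₀ (Nat.cast_ne_zero.mpr Nat.card_pos.ne'), one_div]

end QuotientGroup

open QuotientGroup in
/-- Let `G` be a finite group and `D ≤ G`, and equip the permutation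
module `ℚ[G/D]` with the standard pairing making the cosets an orthonormal basis.  For a
subgroup `H ≤ G`, the `H`-invariants have as basis the `H`-orbit sums of cosets, indexed by
a transversal `T` of the double cosets `H\G/D`; the pairing of the orbit sums of `t, t' ∈ T`
is `(1/|H|)·#(orbit(t) ∩ orbit(t'))`.  The determinant of this matrix equals
`∏_{w ∈ T} 1/|H ∩ wDw⁻¹|`. -/
theorem stmt11 {G : Type*} [Group G] [Fintype G] [DecidableEq G] (D H : Subgroup G)
    (T : Finset G)
    (hT : ∀ g : G, ∃! t, t ∈ T ∧ ∃ h ∈ H, ∃ k ∈ D, g = h * t * k) :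
    Matrix.det (Matrix.of fun t t' : ↥T =>
        ((Nat.card ↥({x : G ⧸ D | ∃ h ∈ H, x = QuotientGroup.mk (h * (t : G))} ∩
            {x : G ⧸ D | ∃ h ∈ H, x = QuotientGroup.mk (h * ((t' : G)))}) : ℚ) /
          (Nat.card H : ℚ))) =
      ∏ t ∈ T, (1 : ℚ) / (Nat.card ↥(H ⊓ D.map (MulAut.conj t).toMonoidHom) : ℚ) := by
  have hdisj : Pairwise (Disjoint on fun t : T => orbit H ((t : G) : G ⧸ D)) := by
    intro t t' hne
    by_contra hmeet
    obtain ⟨a, ha, k, hk, ht'⟩ := exists_eq_mul_mul_of_not_disjoint_orbit D H hmeet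
    have hself : (t' : G) ∈ T ∧ ∃ h ∈ H, ∃ k ∈ D, (t' : G) = h * t' * k :=
      ⟨t'.2, 1, H.one_mem, 1, D.one_mem, by group⟩
    exact hne (Subtype.ext ((hT t').unique ⟨t.2, a, ha, k, hk, ht'⟩ hself))
  simp_rw [setOf_exists_mk_mul_eq_orbit]
  rw [Matrix.det_of_inter_of_pairwise_disjoint (fun s => (Nat.card s : ℚ) / Nat.card H)
    (by simp) _ hdisj, ← Finset.prod_coe_sort T]
  simp_rw [natCard_orbit_mk_div_natCard]
end

section
/- Let K be one of the quadratic fields ℚ(i), ℚ(√2), ℚ(√−2), or ℚ(√p*) where p is an odd prime and p* = (−1)^{(p−1)/2} p. If a rational prime l is the norm of an ideal of K (equivalently, l splits or ramifies with residue degree 1), then l is the norm of an element of K. -/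
/-!
The norm form of `K = ℚ(α)`, `α² = d`, is `x² - d y²`, so it suffices to represent `l` by this
form over `ℚ`. An ideal of norm `l` gives a ring map `𝓞 K → 𝔽_l`, so `d` is a square mod `l`
(and, via `(1 + α) / 2`, `d ≡ 1 mod 8` when `l = 2` and `d ≡ 1 mod 4`). When `l ∤ d`,
reciprocity for `p*` turns this into `l` being a square mod `|d|`, and Legendre's argument
applies: by pigeonhole there is a nonzero `(x, y, z)` with `x² < l|d|`, `y² < l`, `z² < |d|` and
`l d ∣ x² - d y² - l z²`; these bounds force `x² - d y² - l z² ∈ {0, -l d}`, and in both cases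
`l` is a quotient of two values of the norm form. When `l ∣ d`, then `d = ±l` and `l` is the norm
of `√(-l)`, or of `(l + a√l) / b` where `l = a² + b²`.
-/

open Polynomial NumberField

lemma Int.natAbs_neg_one_pow_mul (k p : ℕ) : ((-1) ^ k * (p : ℤ)).natAbs = p := by
  simp [Int.natAbs_mul, Int.natAbs_pow]

lemma Int.not_isSquare_of_prime_natAbs {d : ℤ} (hd : d.natAbs.Prime) : ¬IsSquare d := fun h ↦ by
  rw [← Int.natAbs_of_nonneg h.nonneg, Int.isSquare_natCast_iff] at h
  exact hd.prime.not_isSquare h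

lemma Nat.Prime.eq_natAbs_of_natCast_dvd {l : ℕ} {d : ℤ} (hl : l.Prime) (hd : d.natAbs.Prime)
    (h : (l : ℤ) ∣ d) : l = d.natAbs :=
  (Nat.prime_dvd_prime_iff_eq hl hd).mp (Int.natCast_dvd.mp h)

lemma isSquare_zmod_two (t : ZMod 2) : IsSquare t := by
  revert t
  decide

lemma exists_sq_lt_le_succ_sq {n : ℕ} (hn : n ≠ 0) : ∃ a : ℕ, a ^ 2 < n ∧ n ≤ (a + 1) ^ 2 :=
  ⟨Nat.sqrt (n - 1), by have := Nat.sqrt_le' (n - 1); omega,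
    by have : n - 1 < (Nat.sqrt (n - 1) + 1) ^ 2 := Nat.lt_succ_sqrt' _; omega⟩

lemma exists_ne_zero_map_eq_zero_abs_le {G : Type*} [AddCommGroup G] [Finite G]
    (f : ℤ × ℤ × ℤ →+ G) (A B C : ℕ) (h : Nat.card G < (A + 1) * (B + 1) * (C + 1)) :
    ∃ v ≠ 0, f v = 0 ∧ |v.1| ≤ A ∧ |v.2.1| ≤ B ∧ |v.2.2| ≤ C := by
  classical
  have := Fintype.ofFinite G
  let box := Finset.Icc (0 : ℤ) A ×ˢ Finset.Icc (0 : ℤ) B ×ˢ Finset.Icc (0 : ℤ) C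
  have hcard : (Finset.univ : Finset G).card < box.card := by
    simpa [box, Finset.card_product, ← Nat.card_eq_fintype_card, mul_assoc] using h
  obtain ⟨a, ha, b, hb, hab, hf⟩ :=
    Finset.exists_ne_map_eq_of_card_lt_of_maps_to hcard (f := f) (fun _ _ ↦ by simp)
  simp only [box, Finset.mem_product, Finset.mem_Icc] at ha hb
  refine ⟨a - b, sub_ne_zero.mpr hab, by rw [map_sub, hf, sub_self], ?_, ?_, ?_⟩ <;>
    simp only [Prod.fst_sub, Prod.snd_sub] <;>
    exact abs_sub_le_of_nonneg_of_le (by omega) (by omega) (by omega) (by omega)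

lemma exists_small_dvd_sq_sub_mul_sq_sub_mul_sq {d : ℤ} {l : ℕ} (hd : d ≠ 0) (hl : ¬IsSquare l)
    (hdl : IsCoprime (l : ℤ) d) (hs : IsSquare (d : ZMod l)) (hr : IsSquare (l : ZMod d.natAbs)) :
    ∃ x y z : ℤ, (x, y, z) ≠ 0 ∧ x ^ 2 < l * |d| ∧ y ^ 2 < l ∧ z ^ 2 < |d| ∧
      l * d ∣ x ^ 2 - d * y ^ 2 - l * z ^ 2 := by
  obtain ⟨s, hs⟩ := hs
  obtain ⟨r, hr⟩ := hr
  have hl0 : l ≠ 0 := by rintro rfl; exact hl ⟨0, rfl⟩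
  have hd0 : d.natAbs ≠ 0 := Int.natAbs_ne_zero.mpr hd
  have : NeZero l := ⟨hl0⟩
  have : NeZero d.natAbs := ⟨hd0⟩
  -- `x ≡ s y (mod l)` and `x ≡ r z (mod |d|)` make `x² - d y² - l z²` vanish mod `l` and mod `|d|`
  let f : ℤ × ℤ × ℤ →+ ZMod l × ZMod d.natAbs := AddMonoidHom.mk'
    (fun v ↦ ((v.1 : ZMod l) - s * v.2.1, (v.1 : ZMod d.natAbs) - r * v.2.2))
    (fun v w ↦ by ext <;> simp only [Prod.fst_add, Prod.snd_add, Int.cast_add] <;> ring)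
  obtain ⟨A, hA, hA'⟩ := exists_sq_lt_le_succ_sq (mul_ne_zero hl0 hd0)
  obtain ⟨B, hB, hB'⟩ := exists_sq_lt_le_succ_sq hl0
  obtain ⟨C, hC, hC'⟩ := exists_sq_lt_le_succ_sq hd0
  have hB'' : l < (B + 1) ^ 2 := hB'.lt_of_ne fun h ↦ hl ⟨B + 1, by rw [h, sq]⟩
  have hcard : Nat.card (ZMod l × ZMod d.natAbs) < (A + 1) * (B + 1) * (C + 1) := by
    rw [Nat.card_prod, Nat.card_zmod, Nat.card_zmod]
    refine lt_of_pow_lt_pow_left₀ 2 (Nat.zero_le _) ?_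
    calc (l * d.natAbs) ^ 2 = l * d.natAbs * (l * d.natAbs) := sq _
      _ < (A + 1) ^ 2 * ((B + 1) ^ 2 * (C + 1) ^ 2) :=
        Nat.mul_lt_mul_of_le_of_lt hA' (Nat.mul_lt_mul_of_lt_of_le hB'' hC' (by positivity))
          (by positivity)
      _ = ((A + 1) * (B + 1) * (C + 1)) ^ 2 := by ring
  obtain ⟨⟨x, y, z⟩, hv, hfv, hx, hy, hz⟩ := exists_ne_zero_map_eq_zero_abs_le f A B C hcard
  simp only [f, AddMonoidHom.mk'_apply, Prod.mk_eq_zero, sub_eq_zero] at hfv hx hy hz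
  have hd_abs : (d.natAbs : ℤ) = |d| := Int.natCast_natAbs d
  have hsq {t : ℤ} {n : ℕ} (ht : |t| ≤ n) : t ^ 2 ≤ (n : ℤ) ^ 2 :=
    sq_le_sq.mpr (ht.trans (le_abs_self _))
  refine ⟨x, y, z, hv, (hsq hx).trans_lt ?_, (hsq hy).trans_lt ?_, (hsq hz).trans_lt ?_, ?_⟩
  · rw [← hd_abs]; exact_mod_cast hA
  · exact_mod_cast hB
  · rw [← hd_abs]; exact_mod_cast hC
  · refine hdl.mul_dvd ((ZMod.intCast_zmod_eq_zero_iff_dvd _ _).mp ?_)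
      (Int.natAbs_dvd.mp ((ZMod.intCast_zmod_eq_zero_iff_dvd _ _).mp ?_))
    · push_cast
      rw [hfv.1, hs, ZMod.natCast_self]
      ring
    · push_cast
      rw [hfv.2, hr, (ZMod.intCast_zmod_eq_zero_iff_dvd _ _).mpr (Int.natAbs_dvd.mpr dvd_rfl)]
      ring

-- `X + Y √d = (x + y √d) / (z + w √d)`
lemma exists_sq_sub_mul_sq_eq_of_eq_mul {F : Type*} [Field F] {d l x y z w : F}
    (hN : z ^ 2 - d * w ^ 2 ≠ 0) (h : x ^ 2 - d * y ^ 2 = l * (z ^ 2 - d * w ^ 2)) :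
    ∃ X Y : F, X ^ 2 - d * Y ^ 2 = l :=
  ⟨(x * z - d * y * w) / (z ^ 2 - d * w ^ 2), (y * z - x * w) / (z ^ 2 - d * w ^ 2), by
    field_simp
    linear_combination (z ^ 2 - d * w ^ 2) * h⟩

lemma Int.eq_zero_of_sq_eq_mul_sq {d x y : ℤ} (hd : ¬IsSquare d) (h : x ^ 2 = d * y ^ 2) :
    y = 0 := by
  by_contra hy
  refine hd (Rat.isSquare_intCast_iff.mp ⟨x / y, ?_⟩)
  field_simp
  exact_mod_cast (by linear_combination -h : d * y ^ 2 = x ^ 2)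

lemma exists_rat_sq_sub_mul_sq_eq_of_small {d : ℤ} {l : ℕ} (hd : ¬IsSquare d) {x y z : ℤ}
    (hv : (x, y, z) ≠ 0) (hx : x ^ 2 < l * |d|) (hy : y ^ 2 < l) (hz : z ^ 2 < |d|)
    (hdvd : l * d ∣ x ^ 2 - d * y ^ 2 - l * z ^ 2) :
    ∃ X Y : ℚ, X ^ 2 - d * Y ^ 2 = l := by
  obtain ⟨k, hk⟩ := hdvd
  have hd0 : d ≠ 0 := by rintro rfl; exact hd ⟨0, rfl⟩
  have hl : (0 : ℤ) < l := (sq_nonneg y).trans_lt hy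
  have hk : k = 0 ∨ k = -1 := by
    have : -2 < k ∧ k < 1 := by
      rcases hd0.lt_or_gt with hd' | hd'
      · rw [abs_of_neg hd'] at hx hz
        constructor <;>
          nlinarith [sq_nonneg x, sq_nonneg y, sq_nonneg z, mul_pos hl (neg_pos.mpr hd')]
      · rw [abs_of_pos hd'] at hx hz
        constructor <;> nlinarith [sq_nonneg x, sq_nonneg y, sq_nonneg z, mul_pos hl hd']
    omega
  rcases hk with rfl | rfl
  · have hz0 : z ≠ 0 := by
      rintro rfl
      obtain rfl := Int.eq_zero_of_sq_eq_mul_sq (x := x) (y := y) hd (by linear_combination hk)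
      exact hv (by simp_all)
    refine exists_sq_sub_mul_sq_eq_of_eq_mul (x := (x : ℚ)) (y := (y : ℚ)) (z := (z : ℚ))
      (w := 0) (by simpa using hz0) ?_
    exact_mod_cast (by linear_combination hk : x ^ 2 - d * y ^ 2 = l * (z ^ 2 - d * 0 ^ 2))
  · have hN : z ^ 2 - d * 1 ^ 2 ≠ 0 := fun h ↦ hd ⟨z, by linear_combination -h⟩
    refine exists_sq_sub_mul_sq_eq_of_eq_mul (x := (x : ℚ)) (y := (y : ℚ)) (z := (z : ℚ))
      (w := 1) (by exact_mod_cast hN) ?_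
    exact_mod_cast (by linear_combination hk : x ^ 2 - d * y ^ 2 = l * (z ^ 2 - d * 1 ^ 2))

theorem exists_rat_sq_sub_mul_sq_eq_of_isSquare {d : ℤ} {l : ℕ} (hd : ¬IsSquare d)
    (hl : ¬IsSquare l) (hdl : IsCoprime (l : ℤ) d) (hs : IsSquare (d : ZMod l))
    (hr : IsSquare (l : ZMod d.natAbs)) : ∃ x y : ℚ, x ^ 2 - d * y ^ 2 = l := by
  obtain ⟨x, y, z, hv, hx, hy, hz, hdvd⟩ :=
    exists_small_dvd_sq_sub_mul_sq_sub_mul_sq (by rintro rfl; exact hd ⟨0, rfl⟩) hl hdl hs hr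
  exact exists_rat_sq_sub_mul_sq_eq_of_small hd hv hx hy hz hdvd

lemma exists_rat_sq_sub_mul_sq_eq_of_natAbs_eq {d : ℤ} {l : ℕ} (hl : l.Prime)
    (hdl : d.natAbs = l) (hd : d % 4 ≠ 3) : ∃ x y : ℚ, x ^ 2 - d * y ^ 2 = l := by
  rcases Int.natAbs_eq d with h | h <;> rw [hdl] at h <;> subst h
  · have : Fact l.Prime := ⟨hl⟩
    obtain ⟨a, b, hab⟩ := Nat.Prime.sq_add_sq (p := l) (by omega)
    have hb : (b : ℚ) ≠ 0 := by
      rintro hb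
      rw [Nat.cast_eq_zero.mp hb] at hab
      exact hl.prime.not_isSquare ⟨a, by rw [← hab]; ring⟩
    refine exists_sq_sub_mul_sq_eq_of_eq_mul (x := (l : ℚ)) (y := a) (z := b) (w := 0)
      (by simpa using hb) ?_
    rw [← hab]
    push_cast
    ring
  · exact ⟨0, 1, by simp⟩

lemma Int.neg_one_pow_mul_emod_four {p : ℕ} (hp : Odd p) :
    (-1) ^ ((p - 1) / 2) * (p : ℤ) % 4 = 1 := by
  have := Nat.odd_iff.mp hp
  rcases Nat.even_or_odd ((p - 1) / 2) with h | h
  · rw [h.neg_one_pow]; obtain ⟨k, hk⟩ := h; omega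
  · rw [h.neg_one_pow]; obtain ⟨k, hk⟩ := h; omega

lemma jacobiSym_neg_one_pow_mul {p l : ℕ} (hp : Odd p) (hl : Odd l) :
    jacobiSym ((-1) ^ ((p - 1) / 2) * p) l = jacobiSym l p := by
  rw [jacobiSym.mul_left, jacobiSym.pow_left, jacobiSym.at_neg_one hl,
    ZMod.χ₄_eq_neg_one_pow (Nat.odd_iff.mp hl), jacobiSym.quadratic_reciprocity hp hl,
    ← mul_assoc, ← pow_mul, ← pow_add, Even.neg_one_pow ⟨(l / 2) * (p / 2), by
      rw [show (p - 1) / 2 = p / 2 by have := Nat.odd_iff.mp hp; omega]; ring⟩, one_mul]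

lemma isSquare_natCast_zmod_of_isSquare_neg_one_pow_mul {p l : ℕ} (hp : p.Prime) (hpodd : Odd p)
    (hl : l.Prime) (hlp : l ≠ p) (hs : IsSquare (((-1) ^ ((p - 1) / 2) * p : ℤ) : ZMod l))
    (h8 : l = 2 → (-1) ^ ((p - 1) / 2) * (p : ℤ) % 8 = 1) : IsSquare (l : ZMod p) := by
  have : Fact p.Prime := ⟨hp⟩
  have : Fact l.Prime := ⟨hl⟩
  rcases hl.eq_two_or_odd' with rfl | hlodd
  · have h8 := h8 rfl
    have hp8 : p % 8 = 1 ∨ p % 8 = 7 := by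
      rcases Nat.even_or_odd ((p - 1) / 2) with h | h <;> rw [h.neg_one_pow] at h8 <;> omega
    have hp2 : p ≠ 2 := by rintro rfl; exact Nat.not_odd_iff_even.mpr even_two hpodd
    exact_mod_cast (ZMod.exists_sq_eq_two_iff hp2).mpr hp8
  · have hd0 : (((-1) ^ ((p - 1) / 2) * p : ℤ) : ZMod l) ≠ 0 := by
      rw [Ne, ZMod.intCast_zmod_eq_zero_iff_dvd]
      intro h
      refine hlp ((hl.eq_natAbs_of_natCast_dvd ?_ h).trans (Int.natAbs_neg_one_pow_mul _ _))
      rwa [Int.natAbs_neg_one_pow_mul]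
    have hJ := (legendreSym.eq_one_iff l hd0).mpr hs
    rw [jacobiSym.legendreSym.to_jacobiSym, jacobiSym_neg_one_pow_mul hpodd hlodd] at hJ
    exact_mod_cast ZMod.isSquare_of_jacobiSym_eq_one hJ

/-- `ℚ(√d)` has prime discriminant: `-4`, `8`, `-8` or `p* = (-1) ^ ((p - 1) / 2) * p`. -/
def IsPrimeDiscriminantRadicand (d : ℤ) : Prop :=
  d = -1 ∨ d = 2 ∨ d = -2 ∨ ∃ p : ℕ, p.Prime ∧ Odd p ∧ d = (-1) ^ ((p - 1) / 2) * (p : ℤ)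

lemma IsPrimeDiscriminantRadicand.not_isSquare {d : ℤ} (hd : IsPrimeDiscriminantRadicand d) :
    ¬IsSquare d := by
  rcases hd with rfl | rfl | rfl | ⟨p, hp, -, rfl⟩
  · exact not_isSquare_of_neg (by norm_num)
  · exact Int.not_isSquare_of_prime_natAbs Nat.prime_two
  · exact not_isSquare_of_neg (by norm_num)
  · exact Int.not_isSquare_of_prime_natAbs (by rwa [Int.natAbs_neg_one_pow_mul])

theorem IsPrimeDiscriminantRadicand.exists_rat_sq_sub_mul_sq_eq {d : ℤ}
    (hd : IsPrimeDiscriminantRadicand d) {l : ℕ} (hl : l.Prime) (hs : IsSquare (d : ZMod l))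
    (h8 : l = 2 → d % 4 = 1 → d % 8 = 1) : ∃ x y : ℚ, x ^ 2 - d * y ^ 2 = l := by
  have unramified (hld : ¬(l : ℤ) ∣ d) (hr : IsSquare (l : ZMod d.natAbs)) :=
    exists_rat_sq_sub_mul_sq_eq_of_isSquare hd.not_isSquare hl.prime.not_isSquare
      (((Nat.prime_iff_prime_int.mp hl).irreducible.coprime_iff_not_dvd).mpr hld) hs hr
  rcases hd with rfl | rfl | rfl | ⟨p, hp, hpodd, rfl⟩
  · refine unramified (fun h ↦ hl.ne_one ?_) ⟨0, Subsingleton.elim (α := ZMod 1) _ _⟩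
    exact Nat.dvd_one.mp (Int.natCast_dvd.mp h)
  · rcases eq_or_ne l 2 with rfl | hl2
    · exact exists_rat_sq_sub_mul_sq_eq_of_natAbs_eq hl rfl (by decide)
    · exact unramified (fun h ↦ hl2 (hl.eq_natAbs_of_natCast_dvd (d := 2) Nat.prime_two h))
        (isSquare_zmod_two _)
  · rcases eq_or_ne l 2 with rfl | hl2
    · exact exists_rat_sq_sub_mul_sq_eq_of_natAbs_eq hl rfl (by decide)
    · exact unramified (fun h ↦ hl2 (hl.eq_natAbs_of_natCast_dvd (d := -2) (by norm_num) h))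
        (isSquare_zmod_two _)
  · have hp' : ((-1) ^ ((p - 1) / 2) * (p : ℤ)).natAbs = p := Int.natAbs_neg_one_pow_mul _ _
    have hd4 := Int.neg_one_pow_mul_emod_four hpodd
    rcases eq_or_ne l p with rfl | hlp
    · exact exists_rat_sq_sub_mul_sq_eq_of_natAbs_eq hl hp' (by omega)
    · refine unramified (fun h ↦ hlp ?_) ?_
      · rw [hl.eq_natAbs_of_natCast_dvd (by rwa [hp']) h, hp']
      · rw [hp']
        exact isSquare_natCast_zmod_of_isSquare_neg_one_pow_mul hp hpodd hl hlp hs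
          fun h ↦ h8 h hd4

lemma Algebra.norm_algebraMap_add_algebraMap_mul {F K : Type*} [Field F] [Field K] [Algebra F K]
    (hK : Module.finrank F K = 2) {d : F} (hd : ¬IsSquare d) {α : K}
    (hα : α ^ 2 = algebraMap F K d) (x y : F) :
    Algebra.norm F (algebraMap F K x + algebraMap F K y * α) = x ^ 2 - d * y ^ 2 := by
  have hli : LinearIndependent F ![α, 1] := by
    refine linearIndependent_fin2.mpr ⟨one_ne_zero, fun a ha ↦ hd ⟨a, ?_⟩⟩
    apply FaithfulSMul.algebraMap_injective F K
    simp only [Matrix.cons_val_one, Matrix.cons_val_zero, Algebra.smul_def, mul_one] at ha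
    rw [← hα, ← ha, map_mul, sq]
  let b := basisOfLinearIndependentOfCardEqFinrank hli (by simp [hK])
  have hb : ⇑b = ![α, 1] := coe_basisOfLinearIndependentOfCardEqFinrank _ _
  have hrepr (c₀ c₁ : F) (i : Fin 2) : b.repr (c₀ • α + c₁ • 1) i = ![c₀, c₁] i := by
    have h₀ : b 0 = α := by simp [hb]
    have h₁ : b 1 = 1 := by simp [hb]
    rw [← h₀, ← h₁, map_add, map_smul, map_smul, b.repr_self, b.repr_self]
    fin_cases i <;> simp
  have e₀ : (algebraMap F K x + algebraMap F K y * α) * α = x • α + (y * d) • 1 := by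
    simp only [Algebra.smul_def, map_mul, mul_one, ← hα]
    ring
  have e₁ : (algebraMap F K x + algebraMap F K y * α) * 1 = y • α + x • 1 := by
    simp only [Algebra.smul_def, mul_one]
    ring
  rw [Algebra.norm_eq_matrix_det b, Matrix.det_fin_two]
  simp only [Algebra.leftMulMatrix_eq_repr_mul, hb, Matrix.cons_val_zero, Matrix.cons_val_one,
    e₀, e₁, hrepr]
  ring

lemma Ideal.nonempty_ringHom_zmod_of_card_quotient {R : Type*} [CommRing R] {I : Ideal R}
    {l : ℕ} (hl : l.Prime) (hI : Nat.card (R ⧸ I) = l) : Nonempty (R →+* ZMod l) := by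
  have : Finite (R ⧸ I) := Nat.finite_of_card_ne_zero (hI ▸ hl.ne_zero)
  have := Fintype.ofFinite (R ⧸ I)
  let e := ZMod.ringEquivOfPrime (R ⧸ I) hl (by rw [Fintype.card_eq_nat_card, hI])
  exact ⟨e.symm.toRingHom.comp (Ideal.Quotient.mk I)⟩

lemma NumberField.exists_aeval_zmod_eq_zero {K : Type*} [Field K] [NumberField K]
    {I : Ideal (𝓞 K)} {l : ℕ} (hl : l.Prime) (hI : Ideal.absNorm I = l) {f : ℤ[X]}
    (hf : f.Monic) {x : K} (hx : aeval x f = 0) : ∃ t : ZMod l, aeval t f = 0 := by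
  obtain ⟨g⟩ := Ideal.nonempty_ringHom_zmod_of_card_quotient hl
    (by rw [← hI, Ideal.absNorm_apply, Submodule.cardQuot_apply])
  let x' : 𝓞 K := ⟨x, f, hf, hx⟩
  have hx' : aeval x' f = 0 := FaithfulSMul.algebraMap_injective (𝓞 K) K
    (by rw [← aeval_algebraMap_apply, map_zero]; exact hx)
  exact ⟨g x', by rw [← g.toIntAlgHom_apply, aeval_algHom_apply, hx', map_zero]⟩

lemma NumberField.isSquare_zmod_of_sq_eq {K : Type*} [Field K] [NumberField K]
    {I : Ideal (𝓞 K)} {l : ℕ} (hl : l.Prime) (hI : Ideal.absNorm I = l) {d : ℤ} {α : K}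
    (hα : α ^ 2 = d) : IsSquare (d : ZMod l) := by
  obtain ⟨t, ht⟩ := exists_aeval_zmod_eq_zero hl hI (f := X ^ 2 - C d)
    (monic_X_pow_sub_C d two_ne_zero) (x := α)
    (by simp only [map_sub, map_pow, aeval_X, eq_intCast, map_intCast, hα, sub_self])
  simp only [map_sub, map_pow, aeval_X, eq_intCast, map_intCast] at ht
  exact ⟨t, by linear_combination -ht⟩

lemma NumberField.emod_eight_eq_one {K : Type*} [Field K] [NumberField K] {I : Ideal (𝓞 K)}
    (hI : Ideal.absNorm I = 2) {d : ℤ} (hd : d % 4 = 1) {α : K} (hα : α ^ 2 = d) :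
    d % 8 = 1 := by
  obtain ⟨m, rfl⟩ : ∃ m, d = 4 * m + 1 := ⟨d / 4, by omega⟩
  push_cast at hα
  obtain ⟨t, ht⟩ := exists_aeval_zmod_eq_zero Nat.prime_two hI (f := X ^ 2 - X - C m)
    (by monicity!) (x := (1 + α) / 2)
    (by simp only [map_sub, map_pow, aeval_X, eq_intCast, map_intCast]
        linear_combination hα / 4)
  have hm : ((m : ℤ) : ZMod 2) = 0 := by
    simp only [map_sub, map_pow, aeval_X, eq_intCast, map_intCast] at ht
    linear_combination -ht + ZMod.pow_card t
  rw [ZMod.intCast_zmod_eq_zero_iff_dvd] at hm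
  omega

/-- Let `K` be one of the quadratic fields `ℚ(i)`, `ℚ(√2)`, `ℚ(√−2)`, or
`ℚ(√p*)` where `p` is an odd prime and `p* = (−1)^{(p−1)/2}·p` (so `K = ℚ(√d)` with
`d ∈ {−1, 2, −2, p*}`).  If a rational prime `l` is the norm of an ideal of `K`, then `l` is
the norm of an element of `K`. -/
theorem stmt12 (K : Type*) [Field K] [NumberField K]
    (hdeg : Module.finrank ℚ K = 2) (d : ℤ)
    (hd : d = -1 ∨ d = 2 ∨ d = -2 ∨
      ∃ p : ℕ, p.Prime ∧ Odd p ∧ d = (-1) ^ ((p - 1) / 2) * (p : ℤ))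
    (hK : ∃ α : K, α ^ 2 = (d : K))
    (l : ℕ) (hl : l.Prime)
    (hideal : ∃ I : Ideal (NumberField.RingOfIntegers K), Ideal.absNorm I = l) :
    ∃ w : K, Algebra.norm ℚ w = (l : ℚ) := by
  obtain ⟨α, hα⟩ := hK
  obtain ⟨I, hI⟩ := hideal
  have hd : IsPrimeDiscriminantRadicand d := hd
  have h8 : l = 2 → d % 4 = 1 → d % 8 = 1 := by
    rintro rfl hd4
    exact emod_eight_eq_one hI hd4 hα
  obtain ⟨x, y, hxy⟩ := hd.exists_rat_sq_sub_mul_sq_eq hl (isSquare_zmod_of_sq_eq hl hI hα) h8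
  have hdsq : ¬IsSquare (d : ℚ) := Rat.isSquare_intCast_iff.not.mpr hd.not_isSquare
  have hα' : α ^ 2 = algebraMap ℚ K d := by simpa using hα
  exact ⟨_, (Algebra.norm_algebraMap_add_algebraMap_mul hdeg hdsq hα' x y).trans hxy⟩
end

section
/- Let K/ℚ_l be a finite extension with l ≥ 5 and residue field of order q with q ≡ 1 mod 3. Let E : y² = x³ + Ax + B be an elliptic curve over K with additive potentially good reduction whose minimal discriminant Δ = −16(4A³ + 27B²) has valuation v_K(Δ) ∈ {2, 10} (Kodaira type II or II*). Then Δ is a square in K. -/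
open IsLocalRing Polynomial

lemma neg_three_sq (k : Type*) [Field k] [Fintype k] (q : ℕ)
    (hq : Fintype.card k = q) (hq3 : q % 3 = 1) : IsSquare (-3 : k) := by
  classical
  have h3 : (3 : ℕ) ∣ Fintype.card kˣ := by
    rw [Fintype.card_units, hq]; omega
  obtain ⟨ζ, hζ⟩ := exists_prime_orderOf_dvd_card 3 h3
  set z : k := (ζ : k) with hz
  have hz3 : z ^ 3 = 1 := by
    have : ζ ^ 3 = 1 := by rw [← hζ]; exact pow_orderOf_eq_one ζ
    simpa [hz] using congrArg Units.val this
  have hzne : z ≠ 1 := by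
    intro h
    have : ζ = 1 := Units.ext (by simpa [hz] using h)
    rw [this] at hζ; simp at hζ
  have key : z ^ 2 + z + 1 = 0 := by
    have : (z - 1) * (z ^ 2 + z + 1) = 0 := by linear_combination hz3
    rcases mul_eq_zero.mp this with h | h
    · exact absurd (sub_eq_zero.mp h) hzne
    · exact h
  exact ⟨2 * z + 1, by linear_combination (-4 : k) * key⟩

/-- Hensel lifting of squares of units, residue char ≠ 2. -/
lemma isSquare_of_residue_isSquare (O : Type*) [CommRing O] [HenselianLocalRing O]
    (u : O) (hu : IsUnit u) (h2 : IsUnit (2 : O))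
    (hsq : IsSquare (residue O u)) : IsSquare u := by
  obtain ⟨c, hc⟩ := hsq
  obtain ⟨c₀, rfl⟩ := residue_surjective (R := O) c
  have hcu : IsUnit c₀ := by
    rw [← residue_ne_zero_iff_isUnit]
    intro h
    have h' : residue O u ≠ 0 := (residue_ne_zero_iff_isUnit u).mpr hu
    rw [hc, h, mul_zero] at h'
    exact h' rfl
  have hmonic : (X ^ 2 - C u : O[X]).Monic := by
    apply monic_X_pow_sub_C u (by norm_num)
  have heval : (X ^ 2 - C u : O[X]).eval c₀ ∈ maximalIdeal O := by
    have hz : residue O (c₀ ^ 2 - u) = 0 := by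
      rw [map_sub, map_pow]; linear_combination -hc
    have := Ideal.Quotient.eq_zero_iff_mem.mp hz
    simpa using this
  have hderiv : IsUnit ((X ^ 2 - C u : O[X]).derivative.eval c₀) := by
    have hd : (X ^ 2 - C u : O[X]).derivative.eval c₀ = 2 * c₀ := by
      simp; ring
    rw [hd]
    exact h2.mul hcu
  obtain ⟨a, ha, -⟩ := HenselianLocalRing.is_henselian _ hmonic c₀ heval hderiv
  refine ⟨a, ?_⟩
  have : a ^ 2 - u = 0 := by simpa [IsRoot] using ha
  linear_combination -this

lemma pow_dvd_of_sq (O : Type*) [CommRing O] [IsDomain O] (π : O) (hp : Prime π) :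
    ∀ (n : ℕ) (B : O), π ^ (2 * n) ∣ B ^ 2 → π ^ n ∣ B := by
  intro n
  induction n with
  | zero => intro B _; simp
  | succ n ih =>
    intro B h
    have hπB : π ∣ B := by
      apply hp.dvd_of_dvd_pow (n := 2)
      exact dvd_trans (dvd_pow_self π (by omega)) h
    obtain ⟨b, rfl⟩ := hπB
    have h' : π ^ (2 * n) ∣ b ^ 2 := by
      have h2 : (π : O) ^ 2 ≠ 0 := pow_ne_zero 2 hp.ne_zero
      rw [mul_pow, show 2 * (n + 1) = 2 + 2 * n by ring, pow_add] at h
      exact (mul_dvd_mul_iff_left h2).mp h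
    rw [pow_succ']
    exact mul_dvd_mul (dvd_refl π) (ih b h')

/-- Let `K/ℚ_l` be a finite extension with `l ≥ 5` and residue field of
order `q ≡ 1 mod 3`.  We model `K` as the fraction field of its valuation ring `O`, a
complete (Henselian) discrete valuation ring with finite residue field of characteristic
`l ≥ 5` and cardinality `q` with `q % 3 = 1`.  Let `E : y² = x³ + Ax + B` be an elliptic
curve over `K` with additive potentially good reduction whose minimal discriminant
`Δ = −16(4A³ + 27B²)` has valuation `v_K(Δ) ∈ {2, 10}` (Kodaira type `II` or `II*`);
potential good reduction amounts to `3·v_K(A) ≥ v_K(Δ)`, i.e. `π ∣ A` when `v(Δ) = 2` and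
`π⁴ ∣ A` when `v(Δ) = 10`, for a uniformizer `π`.  Then `Δ` is a square in `K`. -/
theorem stmt13 (O : Type*) [CommRing O] [IsDomain O] [IsDiscreteValuationRing O]
    [HenselianLocalRing O]
    [Fintype (IsLocalRing.ResidueField O)]
    (l q : ℕ) (hl : 5 ≤ l) (hchar : ringChar (IsLocalRing.ResidueField O) = l)
    (hq : Fintype.card (IsLocalRing.ResidueField O) = q) (hq3 : q % 3 = 1)
    (π : O) (hπ : Irreducible π)
    (A B : O) (Δ : O) (hΔ : Δ = -16 * (4 * A ^ 3 + 27 * B ^ 2))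
    (hmin : ((∃ u : Oˣ, Δ = π ^ 2 * u) ∧ π ∣ A) ∨
            ((∃ u : Oˣ, Δ = π ^ 10 * u) ∧ π ^ 4 ∣ A)) :
    IsSquare ((algebraMap O (FractionRing O)) Δ) := by
  haveI : CharP (ResidueField O) l := hchar ▸ ringChar.charP (ResidueField O)
  have hlp : l.Prime := CharP.char_is_prime (ResidueField O) l
  -- natural numbers coprime to l are units in O
  have hnat : ∀ n : ℕ, ¬ l ∣ n → IsUnit (n : O) := by
    intro n hn
    rw [← residue_ne_zero_iff_isUnit]
    have : residue O (n : O) = (n : ResidueField O) := map_natCast _ n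
    rw [this, Ne, CharP.cast_eq_zero_iff (ResidueField O) l]
    exact hn
  have h432 : IsUnit ((432 : ℕ) : O) := by
    apply hnat
    intro hdvd
    have heq : (432 : ℕ) = 2 ^ 4 * 3 ^ 3 := by norm_num
    rw [heq] at hdvd
    rcases (Nat.Prime.dvd_mul hlp).mp hdvd with h | h
    · have := Nat.le_of_dvd (by norm_num) (hlp.dvd_of_dvd_pow h); omega
    · have := Nat.le_of_dvd (by norm_num) (hlp.dvd_of_dvd_pow h); omega
  have h2 : IsUnit (2 : O) := by
    have := hnat 2 (fun h => by have := Nat.le_of_dvd (by norm_num) h; omega)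
    simpa using this
  have hprime : Prime π := hπ.prime
  have hπ0 : residue O π = 0 := by
    rw [← not_ne_iff, residue_ne_zero_iff_isUnit]
    exact hπ.not_isUnit
  -- key step: a unit of the form -432 b² + π w is a square
  have key : ∀ (u : Oˣ) (b w : O), (u : O) = -432 * b ^ 2 + π * w → IsSquare (u : O) := by
    intro u b w huw
    apply isSquare_of_residue_isSquare O _ u.isUnit h2
    obtain ⟨s, hs⟩ := neg_three_sq (ResidueField O) q hq hq3
    have hres : residue O (u : O) = (12 * s * residue O b) * (12 * s * residue O b) := by
      have hru : residue O (u : O) = -432 * (residue O b) ^ 2 + residue O π * residue O w := by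
        rw [huw, map_add, map_mul, map_mul, map_pow, map_neg, map_ofNat]
      rw [hru, hπ0]
      linear_combination (144 * (residue O b) ^ 2 : ResidueField O) * hs
    exact ⟨_, hres⟩
  -- reduce to showing Δ is a square in O
  suffices h : IsSquare Δ by
    obtain ⟨r, hr⟩ := h
    exact ⟨algebraMap O (FractionRing O) r, by rw [hr, map_mul]⟩
  have h432O : IsUnit (432 : O) := by exact_mod_cast h432
  rcases hmin with ⟨⟨u, hΔu⟩, ⟨a, ha⟩⟩ | ⟨⟨u, hΔu⟩, ⟨a, ha⟩⟩
  · -- type II : Δ = π² u, A = π a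
    subst ha
    have hkey : (432 : O) * B ^ 2 = π ^ 2 * (-(u : O) - 64 * π * a ^ 3) := by
      linear_combination hΔ - hΔu
    have hdvd : π ^ (2 * 1) ∣ B ^ 2 := by
      rcases h432O with ⟨v, hv⟩
      refine ⟨(v⁻¹ : Oˣ) * (-(u : O) - 64 * π * a ^ 3), ?_⟩
      calc B ^ 2 = (v⁻¹ : Oˣ) * ((432 : O) * B ^ 2) := by
            rw [← hv, ← mul_assoc]; simp
        _ = π ^ (2*1) * ((v⁻¹ : Oˣ) * (-(u : O) - 64 * π * a ^ 3)) := by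
            rw [hkey]; ring
    obtain ⟨b, hb⟩ := pow_dvd_of_sq O π hprime 1 B hdvd
    rw [pow_one] at hb
    subst hb
    have hcancel : (432 : O) * b ^ 2 = -(u : O) - 64 * π * a ^ 3 := by
      have h2ne : (π : O) ^ 2 ≠ 0 := pow_ne_zero 2 hprime.ne_zero
      apply mul_left_cancel₀ h2ne
      linear_combination hkey
    have hu : (u : O) = -432 * b ^ 2 + π * (-64 * a ^ 3) := by linear_combination hcancel
    obtain ⟨r, hr⟩ := key u b _ hu
    exact ⟨π * r, by rw [hΔu, hr]; ring⟩
  · -- type II* : Δ = π¹⁰ u, A = π⁴ a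
    subst ha
    have hkey : (432 : O) * B ^ 2 = π ^ 10 * (-(u : O) - 64 * π ^ 2 * a ^ 3) := by
      linear_combination hΔ - hΔu
    have hdvd : π ^ (2 * 5) ∣ B ^ 2 := by
      rcases h432O with ⟨v, hv⟩
      refine ⟨(v⁻¹ : Oˣ) * (-(u : O) - 64 * π ^ 2 * a ^ 3), ?_⟩
      calc B ^ 2 = (v⁻¹ : Oˣ) * ((432 : O) * B ^ 2) := by
            rw [← hv, ← mul_assoc]; simp
        _ = π ^ (2*5) * ((v⁻¹ : Oˣ) * (-(u : O) - 64 * π ^ 2 * a ^ 3)) := by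
            rw [hkey]; ring
    obtain ⟨b, hb⟩ := pow_dvd_of_sq O π hprime 5 B hdvd
    subst hb
    have hcancel : (432 : O) * b ^ 2 = -(u : O) - 64 * π ^ 2 * a ^ 3 := by
      have h2ne : (π : O) ^ 10 ≠ 0 := pow_ne_zero 10 hprime.ne_zero
      apply mul_left_cancel₀ h2ne
      linear_combination hkey
    have hu : (u : O) = -432 * b ^ 2 + π * (-64 * π * a ^ 3) := by linear_combination hcancel
    obtain ⟨r, hr⟩ := key u b _ hu
    exact ⟨π ^ 5 * r, by rw [hΔu, hr]; ring⟩
end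

section
/- Let G = D_{pq} be the dihedral group of order 2pq with p, q distinct odd primes, and let Θ = C_2 − D_p − D_q + D_{pq} ∈ B(G), where C_2 is generated by a reflection, D_p and D_q are the dihedral subgroups of orders 2p and 2q containing it, and D_{pq} = G. Then the virtual permutation representation ℂ[G/C_2] ⊖ ℂ[G/D_p] ⊖ ℂ[G/D_q] ⊕ ℂ[G/G] is isomorphic to σ_{pq}, the unique faithful irreducible rational representation of G, that is, the sum of all faithful 2-dimensional complex irreducible representations of G. -/
open scoped BigOperators

/-- The character of `σ_{pq}`, the unique faithful irreducible rational representation of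
the dihedral group `D_m` (`m = pq`): the sum of all Galois conjugates of a faithful
two-dimensional complex irreducible representation.  Its value is
`∑_{j ∈ (ℤ/m)ˣ} ζ_m^{kj}` on a rotation `r^k` and `0` on reflections. -/
noncomputable def sigmaChar (m : ℕ) [NeZero m] : DihedralGroup m → ℂ
  | DihedralGroup.r k => ∑ j : (ZMod m)ˣ,
      Complex.exp (2 * Real.pi * Complex.I * ((k * (j : ZMod m)).val : ℂ) / (m : ℂ))
  | DihedralGroup.sr _ => 0

set_option linter.unusedSectionVars false
set_option linter.unusedVariables false

namespace Stmt15Aux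
open DihedralGroup

variable {m : ℕ} [NeZero m]

/-- rotation/reflection index of a dihedral group element -/
def idx : DihedralGroup m → ZMod m
  | DihedralGroup.r i => i
  | DihedralGroup.sr i => i

@[simp] lemma idx_r (i : ZMod m) : idx (r i : DihedralGroup m) = i := rfl
@[simp] lemma idx_sr (i : ZMod m) : idx (sr i : DihedralGroup m) = i := rfl

variable {c : ℕ}

lemma dvd_val_add (h : c ∣ m) {a b : ZMod m} (ha : c ∣ a.val) (hb : c ∣ b.val) :
    c ∣ (a + b).val := by
  rw [ZMod.val_add]; exact (Nat.dvd_mod_iff h).mpr (dvd_add ha hb)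

lemma dvd_val_neg (h : c ∣ m) {a : ZMod m} (ha : c ∣ a.val) : c ∣ (-a).val := by
  rw [ZMod.neg_val']; exact (Nat.dvd_mod_iff h).mpr (Nat.dvd_sub h ha)

lemma dvd_val_neg_iff (h : c ∣ m) {a : ZMod m} : c ∣ (-a).val ↔ c ∣ a.val :=
  ⟨fun h' => by simpa using dvd_val_neg h h', dvd_val_neg h⟩

lemma dvd_val_sub (h : c ∣ m) {a b : ZMod m} (ha : c ∣ a.val) (hb : c ∣ b.val) :
    c ∣ (a - b).val := by
  rw [sub_eq_add_neg]; exact dvd_val_add h ha (dvd_val_neg h hb)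

/-- The "dihedral-type" subgroup of index `c` (for `c ∣ m`). -/
def dsub (m : ℕ) [NeZero m] (c : ℕ) (h : c ∣ m) : Subgroup (DihedralGroup m) where
  carrier := {x | c ∣ (idx x).val}
  one_mem' := by simp [one_def, idx, -r_zero]
  mul_mem' := by
    rintro (a | a) (b | b) ha hb <;>
      simp only [Set.mem_setOf_eq, idx_r, idx_sr, r_mul_r, r_mul_sr, sr_mul_r, sr_mul_sr] at * <;>
      first
        | exact dvd_val_add h ha hb
        | exact dvd_val_sub h hb ha
  inv_mem' := by
    rintro (a | a) ha <;>
      simp only [Set.mem_setOf_eq, idx_r, idx_sr] at *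
    · show c ∣ (idx (r (-a))).val
      simpa using dvd_val_neg h ha
    · exact ha

@[simp] lemma r_mem_dsub (h : c ∣ m) {i : ZMod m} :
    (r i : DihedralGroup m) ∈ dsub m c h ↔ c ∣ i.val := Iff.rfl

@[simp] lemma sr_mem_dsub (h : c ∣ m) {i : ZMod m} :
    (sr i : DihedralGroup m) ∈ dsub m c h ↔ c ∣ i.val := Iff.rfl

lemma r_pow (a : ZMod m) (t : ℕ) : (r a : DihedralGroup m) ^ t = r ((t : ZMod m) * a) := by
  induction t with
  | zero => simp [one_def, -r_zero]
  | succ n ih => rw [pow_succ, ih, r_mul_r]; push_cast; ring_nf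

lemma closure_eq (h : c ∣ m) :
    Subgroup.closure {(r (c : ZMod m) : DihedralGroup m), sr 0} = dsub m c h := by
  apply le_antisymm
  · rw [Subgroup.closure_le]
    rintro x (rfl | rfl)
    · show c ∣ ((c : ZMod m)).val
      rw [ZMod.val_natCast]
      exact (Nat.dvd_mod_iff h).mpr dvd_rfl
    · show c ∣ (0 : ZMod m).val
      simp
  · intro x hx
    have key : ∀ i : ZMod m, c ∣ i.val →
        (r i : DihedralGroup m) ∈ Subgroup.closure {(r (c : ZMod m) : DihedralGroup m), sr 0} := by
      intro i hi
      obtain ⟨t, ht⟩ := hi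
      have hic : i = ((c * t : ℕ) : ZMod m) := by
        rw [← ht, ZMod.natCast_rightInverse i]
      have : (r (c : ZMod m) : DihedralGroup m) ^ t = r i := by
        rw [r_pow, hic]; push_cast; ring_nf
      rw [← this]
      exact pow_mem (Subgroup.subset_closure (by simp)) t
    cases x with
    | r i => exact key i hx
    | sr i =>
      have h1 : (sr i : DihedralGroup m) = (r i)⁻¹ * sr 0 := by
        show sr i = r (-i) * sr 0
        rw [r_mul_sr, zero_sub, neg_neg]
      rw [h1]
      exact mul_mem (inv_mem (key i hx)) (Subgroup.subset_closure (by simp))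

lemma zpowers_sr_eq :
    Subgroup.zpowers (sr 0 : DihedralGroup m) = dsub m m dvd_rfl := by
  apply le_antisymm
  · rw [Subgroup.zpowers_le]
    show m ∣ (0 : ZMod m).val
    simp
  · intro x hx
    have z : ∀ i : ZMod m, m ∣ i.val → i = 0 := by
      intro i hi
      rw [← ZMod.val_eq_zero]
      exact Nat.eq_zero_of_dvd_of_lt hi (ZMod.val_lt i)
    cases x with
    | r i =>
      have := z i hx
      subst this
      exact one_mem _
    | sr i =>
      have := z i hx
      subst this
      exact Subgroup.mem_zpowers _

lemma top_eq : dsub m 1 (one_dvd m) = ⊤ := by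
  rw [eq_top_iff]
  rintro (a | a) _ <;> exact one_dvd _


/-- multiples of `c` in `ZMod m`, counted. -/
def valDvdEquiv (h : c ∣ m) (hc0 : c ≠ 0) : {z : ZMod m // c ∣ z.val} ≃ Fin (m / c) where
  toFun z := ⟨z.1.val / c, Nat.div_lt_div_of_lt_of_dvd h (ZMod.val_lt z.1)⟩
  invFun t := ⟨((c * t.1 : ℕ) : ZMod m), by
    rw [ZMod.val_natCast, Nat.mod_eq_of_lt]
    · exact dvd_mul_right c t.1
    · calc c * t.1 < c * (m / c) :=
            (Nat.mul_lt_mul_left (Nat.pos_of_ne_zero hc0)).mpr t.2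
        _ = m := Nat.mul_div_cancel' h⟩
  left_inv z := by
    ext
    show (((c * (z.1.val / c) : ℕ)) : ZMod m) = z.1
    rw [Nat.mul_div_cancel' z.2, ZMod.natCast_rightInverse z.1]
  right_inv t := by
    ext
    show (((c * t.1 : ℕ) : ZMod m)).val / c = t.1
    rw [ZMod.val_natCast, Nat.mod_eq_of_lt, Nat.mul_div_cancel_left _ (Nat.pos_of_ne_zero hc0)]
    calc c * t.1 < c * (m / c) :=
          (Nat.mul_lt_mul_left (Nat.pos_of_ne_zero hc0)).mpr t.2
      _ = m := Nat.mul_div_cancel' h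

/-- whether an element is a reflection. -/
def isSr : DihedralGroup m → Bool
  | DihedralGroup.r _ => false
  | DihedralGroup.sr _ => true

def dsubEquiv (h : c ∣ m) : (dsub m c h) ≃ Bool × {z : ZMod m // c ∣ z.val} where
  toFun x := (isSr x.1, ⟨idx x.1, x.2⟩)
  invFun p := if p.1 then ⟨sr p.2.1, p.2.2⟩ else ⟨r p.2.1, p.2.2⟩
  left_inv := by rintro ⟨(i | i), hi⟩ <;> rfl
  right_inv := by rintro ⟨(b | b), z⟩ <;> rfl

lemma card_dsub (h : c ∣ m) (hc0 : c ≠ 0) : Nat.card (dsub m c h) = 2 * (m / c) := by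
  rw [Nat.card_congr (dsubEquiv h), Nat.card_prod, Nat.card_congr (valDvdEquiv h hc0)]
  simp

lemma index_dsub (h : c ∣ m) (hc0 : c ≠ 0) : (dsub m c h).index = c := by
  have h1 := Subgroup.card_mul_index (dsub m c h)
  rw [card_dsub h hc0, Nat.card_eq_fintype_card, DihedralGroup.card] at h1
  have hmc : m / c ≠ 0 := by
    have : 0 < m / c := Nat.div_pos (Nat.le_of_dvd (Nat.pos_of_ne_zero (NeZero.ne m)) h)
      (Nat.pos_of_ne_zero hc0)
    omega
  have h2 : (m / c) * (dsub m c h).index = (m / c) * c := by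
    have h3 : (m / c) * c = m := Nat.div_mul_cancel h
    rw [mul_assoc] at h1
    omega
  exact Nat.eq_of_mul_eq_mul_left (Nat.pos_of_ne_zero hmc) h2


@[simp] lemma r_inv (i : ZMod m) : (r i : DihedralGroup m)⁻¹ = r (-i) := rfl
@[simp] lemma sr_inv (i : ZMod m) : (sr i : DihedralGroup m)⁻¹ = sr i := rfl

lemma smul_mk_eq (H : Subgroup (DihedralGroup m)) (g y : DihedralGroup m) :
    g • ((y : DihedralGroup m ⧸ H)) = ↑(g * y) := by
  rw [← smul_eq_mul, MulAction.Quotient.smul_mk]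

lemma r_fixed_iff (h : c ∣ m) (k : ZMod m) (y : DihedralGroup m) :
    ((r k : DihedralGroup m) • (y : DihedralGroup m ⧸ dsub m c h) = y) ↔ c ∣ k.val := by
  rw [smul_mk_eq, QuotientGroup.eq]
  cases y with
  | r b =>
    have e : (r k * r b : DihedralGroup m)⁻¹ * r b = r (-k) := by
      simp only [r_mul_r, r_inv, r_mul_r]
      congr 1; ring
    rw [e, r_mem_dsub]
    exact dvd_val_neg_iff h
  | sr b =>
    have e : (r k * sr b : DihedralGroup m)⁻¹ * sr b = r k := by
      simp only [r_mul_sr, sr_inv, sr_mul_sr]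
      ring_nf
    rw [e, r_mem_dsub]

lemma permFix_dsub_r (h : c ∣ m) (hc0 : c ≠ 0) (k : ZMod m) :
    permFix (dsub m c h) (r k) = if c ∣ k.val then c else 0 := by
  by_cases hk : c ∣ k.val
  · rw [if_pos hk]
    have hall : ∀ x : DihedralGroup m ⧸ dsub m c h, (r k : DihedralGroup m) • x = x := by
      intro x
      obtain ⟨y, rfl⟩ := QuotientGroup.mk_surjective x
      exact (r_fixed_iff h k y).mpr hk
    unfold permFix
    rw [Nat.card_congr (Equiv.subtypeUnivEquiv hall)]
    exact index_dsub h hc0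
  · rw [if_neg hk]
    have : IsEmpty {x : DihedralGroup m ⧸ dsub m c h // (r k : DihedralGroup m) • x = x} := by
      constructor
      rintro ⟨x, hx⟩
      obtain ⟨y, rfl⟩ := QuotientGroup.mk_surjective x
      exact hk ((r_fixed_iff h k y).mp hx)
    exact Nat.card_of_isEmpty

lemma permFix_dsub_sr (h : c ∣ m) (hmodd : Odd m) (a : ZMod m) :
    permFix (dsub m c h) (sr a) = 1 := by
  have hcodd : Odd c := by
    rcases Nat.even_or_odd c with hc | hc
    · exact absurd (((even_iff_two_dvd.mp hc).trans h) |> even_iff_two_dvd.mpr)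
        (Nat.not_even_iff_odd.mpr hmodd)
    · exact hc
  have hc2 : Nat.Coprime c 2 := hcodd.coprime_two_right
  have key2 : ∀ z : ZMod m, c ∣ ((2 : ZMod m) * z).val → c ∣ z.val := by
    intro z hz
    have h1 : ((2 : ZMod m) * z).val = (2 * z.val) % m := by
      have e : (2 : ZMod m) * z = ((2 * z.val : ℕ) : ZMod m) := by
        push_cast
        rw [ZMod.natCast_rightInverse z]
      rw [e, ZMod.val_natCast]
    rw [h1, Nat.dvd_mod_iff h] at hz
    exact hc2.dvd_of_dvd_mul_left hz
  have h2m : (2 : ℕ) ∣ m + 1 := by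
    obtain ⟨t, ht⟩ := hmodd
    exact ⟨t + 1, by omega⟩
  set u : ZMod m := (((m + 1) / 2 : ℕ) : ZMod m) with hu
  have h2u : (2 : ZMod m) * u = 1 := by
    have e : (2 * ((m + 1) / 2) : ℕ) = m + 1 := Nat.mul_div_cancel' h2m
    calc (2 : ZMod m) * u = ((2 * ((m + 1) / 2) : ℕ) : ZMod m) := by rw [hu]; push_cast; ring
      _ = ((m + 1 : ℕ) : ZMod m) := by rw [e]
      _ = 1 := by push_cast; simp [ZMod.natCast_self]
  set b₀ : ZMod m := -(u * a) with hb
  have hab : a + 2 * b₀ = 0 := by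
    calc a + 2 * b₀ = a - (2 * u) * a := by rw [hb]; ring
      _ = a - 1 * a := by rw [h2u]
      _ = 0 := by ring
  -- the distinguished fixed coset
  have hfix : (sr a : DihedralGroup m) • ((r b₀ : DihedralGroup m) :
      DihedralGroup m ⧸ dsub m c h) = ((r b₀ : DihedralGroup m) : DihedralGroup m ⧸ dsub m c h) := by
    rw [smul_mk_eq, QuotientGroup.eq]
    have e : (sr a * r b₀ : DihedralGroup m)⁻¹ * r b₀ = sr (a + 2 * b₀) := by
      simp only [sr_mul_r, sr_inv, sr_mul_r]
      congr 1; ring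
    rw [e, hab, sr_mem_dsub]
    simp
  -- every fixed coset equals it
  have huniq : ∀ y : DihedralGroup m,
      (sr a : DihedralGroup m) • ((y : DihedralGroup m ⧸ dsub m c h)) = (y : _) →
      ((y : DihedralGroup m ⧸ dsub m c h)) = ((r b₀ : DihedralGroup m) : _) := by
    intro y hy
    rw [smul_mk_eq, QuotientGroup.eq] at hy
    rw [QuotientGroup.eq]
    cases y with
    | r b =>
      have e : (sr a * r b : DihedralGroup m)⁻¹ * r b = sr (a + 2 * b) := by
        simp only [sr_mul_r, sr_inv, sr_mul_r]
        congr 1; ring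
      rw [e, sr_mem_dsub] at hy
      have e2 : (r b : DihedralGroup m)⁻¹ * r b₀ = r (b₀ - b) := by
        simp only [r_inv, r_mul_r]
        ring_nf
      rw [e2, r_mem_dsub]
      have hz : c ∣ ((2 : ZMod m) * (b₀ - b)).val := by
        have e3 : (2 : ZMod m) * (b₀ - b) = (a + 2 * b₀) - (a + 2 * b) := by ring
        rw [e3, hab]
        have := dvd_val_neg h hy
        simpa [zero_sub] using this
      exact key2 _ hz
    | sr b =>
      have e : (sr a * sr b : DihedralGroup m)⁻¹ * sr b = sr (2 * b - a) := by
        simp only [sr_mul_sr, r_inv, r_mul_sr]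
        congr 1; ring
      rw [e, sr_mem_dsub] at hy
      have e2 : (sr b : DihedralGroup m)⁻¹ * r b₀ = sr (b + b₀) := by
        simp only [sr_inv, sr_mul_r]
      rw [e2, sr_mem_dsub]
      have hz : c ∣ ((2 : ZMod m) * (b + b₀)).val := by
        have e3 : (2 : ZMod m) * (b + b₀) = (2 * b - a) + (a + 2 * b₀) := by ring
        rw [e3, hab]
        simpa using hy
      exact key2 _ hz
  rw [permFix, Nat.card_eq_one_iff_unique]
  constructor
  · constructor
    rintro ⟨x, hx⟩ ⟨y, hy⟩
    obtain ⟨x', rfl⟩ := QuotientGroup.mk_surjective x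
    obtain ⟨y', rfl⟩ := QuotientGroup.mk_surjective y
    have := (huniq x' hx).trans (huniq y' hy).symm
    exact Subtype.ext this
  · exact ⟨⟨_, hfix⟩⟩


/-! ### The Ramanujan-sum side -/

noncomputable def zeta (m : ℕ) : ℂ := Complex.exp (2 * Real.pi * Complex.I / (m : ℂ))

lemma zeta_prim (hm : m ≠ 0) : IsPrimitiveRoot (zeta m) m :=
  Complex.isPrimitiveRoot_exp m hm

lemma zeta_pow_self : zeta m ^ m = 1 := (zeta_prim (NeZero.ne m)).pow_eq_one

lemma zeta_pow_eq_one_iff (t : ℕ) : zeta m ^ t = 1 ↔ m ∣ t :=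
  (zeta_prim (NeZero.ne m)).pow_eq_one_iff_dvd t

lemma zeta_pow_mod (a : ℕ) : zeta m ^ a = zeta m ^ (a % m) := by
  conv_lhs => rw [← Nat.mod_add_div a m]
  rw [pow_add, pow_mul, zeta_pow_self, one_pow, mul_one]

lemma zeta_pow_natCast (a : ℕ) : zeta m ^ ((a : ZMod m)).val = zeta m ^ a := by
  rw [ZMod.val_natCast, ← zeta_pow_mod]

lemma exp_eq_zeta (x : ZMod m) :
    Complex.exp (2 * Real.pi * Complex.I * (x.val : ℂ) / (m : ℂ)) = zeta m ^ x.val := by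
  rw [zeta, ← Complex.exp_nat_mul]
  congr 1
  ring

lemma geom (w : ℂ) (n : ℕ) (hn : n ≠ 0) (h : w ^ n = 1) :
    ∑ i ∈ Finset.range n, w ^ i = if w = 1 then (n : ℂ) else 0 := by
  split_ifs with hw
  · subst hw; simp
  · rw [geom_sum_eq hw, h]
    simp

lemma sum_zmod (f : ZMod m → ℂ) : ∑ x : ZMod m, f x = ∑ i ∈ Finset.range m, f i := by
  apply Finset.sum_nbij' (fun x : ZMod m => x.val) (fun i : ℕ => (i : ZMod m))
  · intro a _; exact Finset.mem_range.mpr (ZMod.val_lt a)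
  · intro a _; exact Finset.mem_univ _
  · intro a _; exact ZMod.natCast_rightInverse a
  · intro a ha; exact ZMod.val_natCast_of_lt (Finset.mem_range.mp ha)
  · intro a _; rw [ZMod.natCast_rightInverse a]

lemma mul_cast_eq (k : ZMod m) (i : ℕ) : k * (i : ZMod m) = ((k.val * i : ℕ) : ZMod m) := by
  push_cast
  rw [ZMod.natCast_rightInverse k]

lemma sum_all (k : ZMod m) :
    ∑ x : ZMod m, zeta m ^ ((k * x).val) = if m ∣ k.val then (m : ℂ) else 0 := by
  rw [sum_zmod]
  have e : ∀ i : ℕ, zeta m ^ ((k * (i : ZMod m)).val) = (zeta m ^ k.val) ^ i := by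
    intro i
    rw [mul_cast_eq, zeta_pow_natCast, pow_mul]
  rw [Finset.sum_congr rfl (fun i _ => e i)]
  rw [geom _ m (NeZero.ne m) (by rw [← pow_mul, mul_comm, pow_mul, zeta_pow_self, one_pow])]
  simp only [zeta_pow_eq_one_iff]

lemma sum_dvd (a b : ℕ) (hab : m = a * b) (ha : a ≠ 0) (hb : b ≠ 0) (k : ZMod m) :
    ∑ x ∈ Finset.univ.filter (fun x : ZMod m => a ∣ x.val), zeta m ^ ((k * x).val)
      = if b ∣ k.val then (b : ℂ) else 0 := by
  have hbm : ∀ x : ZMod m, a ∣ x.val → x.val / a < b := by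
    intro x hx
    have h1 := ZMod.val_lt x
    have h2 : x.val < a * b := by omega
    exact Nat.div_lt_of_lt_mul h2
  have hmem : ∀ t ∈ Finset.range b, ((a * t : ℕ) : ZMod m).val = a * t := by
    intro t ht
    apply ZMod.val_natCast_of_lt
    rw [hab]
    exact Nat.mul_lt_mul_left (Nat.pos_of_ne_zero ha) |>.mpr (Finset.mem_range.mp ht)
  have key : ∑ x ∈ Finset.univ.filter (fun x : ZMod m => a ∣ x.val), zeta m ^ ((k * x).val)
      = ∑ t ∈ Finset.range b, (zeta m ^ (k.val * a)) ^ t := by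
    apply Finset.sum_nbij' (fun x : ZMod m => x.val / a) (fun t : ℕ => ((a * t : ℕ) : ZMod m))
    · intro x hx
      exact Finset.mem_range.mpr (hbm x (Finset.mem_filter.mp hx).2)
    · intro t ht
      refine Finset.mem_filter.mpr ⟨Finset.mem_univ _, ?_⟩
      rw [hmem t ht]
      exact dvd_mul_right a t
    · intro x hx
      obtain ⟨-, hx⟩ := Finset.mem_filter.mp hx
      rw [Nat.mul_div_cancel' hx, ZMod.natCast_rightInverse x]
    · intro t ht
      rw [hmem t ht, Nat.mul_div_cancel_left _ (Nat.pos_of_ne_zero ha)]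
    · intro x hx
      obtain ⟨-, hx⟩ := Finset.mem_filter.mp hx
      have hx2 : x = ((a * (x.val / a) : ℕ) : ZMod m) := by
        rw [Nat.mul_div_cancel' hx, ZMod.natCast_rightInverse x]
      calc zeta m ^ (k * x).val
          = zeta m ^ (k * ((a * (x.val / a) : ℕ) : ZMod m)).val := by rw [← hx2]
        _ = zeta m ^ (k.val * (a * (x.val / a))) := by rw [mul_cast_eq, zeta_pow_natCast]
        _ = (zeta m ^ (k.val * a)) ^ (x.val / a) := by rw [← pow_mul, mul_assoc]
  rw [key, geom _ b hb (by
    rw [← pow_mul, mul_assoc, ← hab, mul_comm, pow_mul, zeta_pow_self, one_pow])]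
  congr 1
  rw [eq_iff_iff, zeta_pow_eq_one_iff]
  constructor
  · intro hd
    refine (Nat.mul_dvd_mul_iff_right (Nat.pos_of_ne_zero ha)).mp ?_
    rw [mul_comm b a, ← hab]
    exact hd
  · intro hd
    have h3 : b * a ∣ k.val * a := (Nat.mul_dvd_mul_iff_right (Nat.pos_of_ne_zero ha)).mpr hd
    rwa [mul_comm b a, ← hab] at h3


lemma sum_units {p q : ℕ} (hp : p.Prime) (hq : q.Prime) [NeZero (p * q)]
    (k : ZMod (p * q)) :
    ∑ j : (ZMod (p * q))ˣ, zeta (p * q) ^ ((k * (j : ZMod (p * q))).val)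
      = ∑ x ∈ Finset.univ.filter
          (fun x : ZMod (p * q) => ¬(p ∣ x.val) ∧ ¬(q ∣ x.val)),
          zeta (p * q) ^ ((k * x).val) := by
  have hcop : ∀ x : ZMod (p * q),
      (¬(p ∣ x.val) ∧ ¬(q ∣ x.val)) ↔ Nat.Coprime x.val (p * q) := by
    intro x
    rw [Nat.coprime_mul_iff_right]
    constructor
    · rintro ⟨h1, h2⟩
      exact ⟨((hp.coprime_iff_not_dvd).mpr h1).symm, ((hq.coprime_iff_not_dvd).mpr h2).symm⟩
    · rintro ⟨h1, h2⟩
      exact ⟨fun hd => (hp.coprime_iff_not_dvd).mp h1.symm hd,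
        fun hd => (hq.coprime_iff_not_dvd).mp h2.symm hd⟩
  refine Finset.sum_bij'
    (i := fun (u : (ZMod (p * q))ˣ) (_ : u ∈ Finset.univ) => ((u : ZMod (p * q))))
    (j := fun x hx => ZMod.unitOfCoprime x.val ((hcop x).mp (Finset.mem_filter.mp hx).2))
    ?_ ?_ ?_ ?_ ?_
  · intro u _
    exact Finset.mem_filter.mpr ⟨Finset.mem_univ _, (hcop _).mpr (ZMod.val_coe_unit_coprime u)⟩
  · intro x hx
    exact Finset.mem_univ _
  · intro u hu
    apply Units.ext
    rw [ZMod.coe_unitOfCoprime, ZMod.natCast_rightInverse]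
  · intro x hx
    show ((ZMod.unitOfCoprime x.val _ : (ZMod (p * q))ˣ) : ZMod (p * q)) = x
    rw [ZMod.coe_unitOfCoprime, ZMod.natCast_rightInverse]
  · intro u _
    rfl

lemma ramanujan {p q : ℕ} (hp : p.Prime) (hq : q.Prime) (hpq : p ≠ q) [NeZero (p * q)]
    (k : ZMod (p * q)) :
    ∑ j : (ZMod (p * q))ˣ, Complex.exp
        (2 * Real.pi * Complex.I * (((k * (j : ZMod (p * q))).val : ℕ) : ℂ) / ((p * q : ℕ) : ℂ))
      = (if (p * q) ∣ k.val then ((p * q : ℕ) : ℂ) else 0)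
        - (if q ∣ k.val then (q : ℂ) else 0) - (if p ∣ k.val then (p : ℂ) else 0) + 1 := by
  have hp0 : p ≠ 0 := hp.ne_zero
  have hq0 : q ≠ 0 := hq.ne_zero
  have h1 : ∑ j : (ZMod (p * q))ˣ, Complex.exp
        (2 * Real.pi * Complex.I * (((k * (j : ZMod (p * q))).val : ℕ) : ℂ) / ((p * q : ℕ) : ℂ))
      = ∑ j : (ZMod (p * q))ˣ, zeta (p * q) ^ ((k * (j : ZMod (p * q))).val) :=
    Finset.sum_congr rfl (fun j _ => exp_eq_zeta _)
  rw [h1, sum_units hp hq]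
  set f : ZMod (p * q) → ℂ := fun x => zeta (p * q) ^ ((k * x).val) with hf
  have hsplit := Finset.sum_filter_add_sum_filter_not Finset.univ
    (fun x : ZMod (p * q) => p ∣ x.val ∨ q ∣ x.val) f
  have hnot : Finset.univ.filter (fun x : ZMod (p * q) => ¬(p ∣ x.val ∨ q ∣ x.val))
      = Finset.univ.filter (fun x : ZMod (p * q) => ¬(p ∣ x.val) ∧ ¬(q ∣ x.val)) := by
    apply Finset.filter_congr
    intro x _
    tauto
  have hunion : ∑ x ∈ Finset.univ.filter (fun x : ZMod (p * q) => p ∣ x.val ∨ q ∣ x.val), f x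
      + ∑ x ∈ Finset.univ.filter (fun x : ZMod (p * q) => p ∣ x.val ∧ q ∣ x.val), f x
      = ∑ x ∈ Finset.univ.filter (fun x : ZMod (p * q) => p ∣ x.val), f x
      + ∑ x ∈ Finset.univ.filter (fun x : ZMod (p * q) => q ∣ x.val), f x := by
    rw [Finset.filter_or, Finset.filter_and]
    exact Finset.sum_union_inter
  have hinter : Finset.univ.filter (fun x : ZMod (p * q) => p ∣ x.val ∧ q ∣ x.val) = {0} := by
    ext x
    simp only [Finset.mem_filter, Finset.mem_univ, true_and, Finset.mem_singleton]
    constructor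
    · rintro ⟨h1, h2⟩
      have hco : Nat.Coprime p q := (Nat.coprime_primes hp hq).mpr hpq
      have := Nat.Coprime.mul_dvd_of_dvd_of_dvd hco h1 h2
      have hz : x.val = 0 := Nat.eq_zero_of_dvd_of_lt this (ZMod.val_lt x) |>.symm ▸ rfl
      rw [← ZMod.val_eq_zero]
      exact Nat.eq_zero_of_dvd_of_lt this (ZMod.val_lt x)
    · rintro rfl
      simp
  have hzero : ∑ x ∈ Finset.univ.filter
      (fun x : ZMod (p * q) => p ∣ x.val ∧ q ∣ x.val), f x = 1 := by
    rw [hinter, Finset.sum_singleton, hf]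
    simp
  have hP : ∑ x ∈ Finset.univ.filter (fun x : ZMod (p * q) => p ∣ x.val), f x
      = if q ∣ k.val then (q : ℂ) else 0 := sum_dvd p q rfl hp0 hq0 k
  have hQ : ∑ x ∈ Finset.univ.filter (fun x : ZMod (p * q) => q ∣ x.val), f x
      = if p ∣ k.val then (p : ℂ) else 0 := sum_dvd q p (mul_comm p q) hq0 hp0 k
  have hAll : ∑ x : ZMod (p * q), f x = if (p * q) ∣ k.val then ((p * q : ℕ) : ℂ) else 0 := by
    rw [hf]
    exact_mod_cast sum_all k
  rw [hnot] at hsplit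
  have goal : ∑ x ∈ Finset.univ.filter
      (fun x : ZMod (p * q) => ¬(p ∣ x.val) ∧ ¬(q ∣ x.val)), f x
      = (∑ x : ZMod (p * q), f x)
        - (if q ∣ k.val then (q : ℂ) else 0) - (if p ∣ k.val then (p : ℂ) else 0) + 1 := by
    rw [← hP, ← hQ, ← hzero]
    linear_combination hsplit - hunion
  rw [goal, hAll]


end Stmt15Aux

/-- Let `G = D_{pq}` be the dihedral group of order `2pq`, `p, q` distinct
odd primes.  Let `C₂` be generated by a reflection, `D_p`, `D_q` the dihedral subgroups of
orders `2p`, `2q` containing it (generated by that reflection together with `r^q`, resp.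
`r^p`).  Then the virtual permutation representation
`ℂ[G/C₂] ⊖ ℂ[G/D_p] ⊖ ℂ[G/D_q] ⊕ ℂ[G/G]` is isomorphic to `σ_{pq}`, expressed as an
equality of (virtual) characters. -/
theorem stmt15 (p q : ℕ) (hp : p.Prime) (hq : q.Prime) (hpodd : Odd p) (hqodd : Odd q)
    (hpq : p ≠ q) [NeZero (p * q)] (g : DihedralGroup (p * q)) :
    (permFix (Subgroup.zpowers (DihedralGroup.sr 0)) g : ℂ)
      - (permFix (Subgroup.closure {DihedralGroup.r (q : ZMod (p * q)),
          DihedralGroup.sr 0}) g : ℂ)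
      - (permFix (Subgroup.closure {DihedralGroup.r (p : ZMod (p * q)),
          DihedralGroup.sr 0}) g : ℂ)
      + (permFix (⊤ : Subgroup (DihedralGroup (p * q))) g : ℂ) =
    sigmaChar (p * q) g := by
  have hqdvd : q ∣ p * q := dvd_mul_left q p
  have hpdvd : p ∣ p * q := dvd_mul_right p q
  have hm0 : p * q ≠ 0 := mul_ne_zero hp.ne_zero hq.ne_zero
  have hmodd : Odd (p * q) := hpodd.mul hqodd
  rw [Stmt15Aux.zpowers_sr_eq, Stmt15Aux.closure_eq hqdvd, Stmt15Aux.closure_eq hpdvd,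
    ← Stmt15Aux.top_eq]
  cases g with
  | r k =>
    rw [Stmt15Aux.permFix_dsub_r dvd_rfl hm0 k,
      Stmt15Aux.permFix_dsub_r hqdvd hq.ne_zero k,
      Stmt15Aux.permFix_dsub_r hpdvd hp.ne_zero k,
      Stmt15Aux.permFix_dsub_r (one_dvd _) one_ne_zero k]
    simp only [sigmaChar]
    rw [Stmt15Aux.ramanujan hp hq hpq k]
    simp only [Nat.one_dvd, if_true, apply_ite (Nat.cast : ℕ → ℂ)]
    push_cast
    ring
  | sr a =>
    rw [Stmt15Aux.permFix_dsub_sr dvd_rfl hmodd a,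
      Stmt15Aux.permFix_dsub_sr hqdvd hmodd a,
      Stmt15Aux.permFix_dsub_sr hpdvd hmodd a,
      Stmt15Aux.permFix_dsub_sr (one_dvd _) hmodd a]
    simp only [sigmaChar]
    norm_num
end
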